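/- Let x_k in R^N satisfy x_{k+1} = A1 x_k + B u_k for all k >= 0, with arbitrary initial condition x_0 (no condition on w_0 = (Qperp)^T x_0). Define z~_k = Q^T x_k. Then for all k >= 0, z~_{k+1} = A~1 z~_k + B~ u_k + sum over l = 0 to k-1 of ( E_{k-l} z~_l + F_{k-l} u_l ) + Psi_k w_0, where Psi_k = (Q^T A1 Qperp) ((Qperp)^T A1 Qperp)^k. -/
import Mathlib


open Matrix Finset

private lemma mulVec_sum' {m k : Type*} [Fintype k] {ι : Type*} (s : Finset ι)
    (M : Matrix m k ℝ) (f : ι → k → ℝ) :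
    M *ᵥ (∑ i ∈ s, f i) = ∑ i ∈ s, M *ᵥ f i := by
  ext j
  simp [Matrix.mulVec, dotProduct, Finset.sum_apply, Finset.mul_sum]
  exact Finset.sum_comm

/-- non-Markovian reduced dynamics of the projected observations
with an arbitrary initial condition, including the initial-condition term. -/
theorem stmt_3 (N n p : ℕ) (hN : 0 < N) (hn : 0 < n) (hp : 0 < p) (hnN : n < N)
    (Q : Matrix (Fin N) (Fin n) ℝ) (Qperp : Matrix (Fin N) (Fin (N - n)) ℝ)
    (hQ : Qᵀ * Q = 1) (hQperp : Qperpᵀ * Qperp = 1) (hQQperp : Qᵀ * Qperp = 0)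
    (hsum : Q * Qᵀ + Qperp * Qperpᵀ = 1)
    (A1 : Matrix (Fin N) (Fin N) ℝ) (B : Matrix (Fin N) (Fin p) ℝ)
    (u : ℕ → Fin p → ℝ)
    (At : Matrix (Fin n) (Fin n) ℝ) (Bt : Matrix (Fin n) (Fin p) ℝ)
    (hAt : At = Qᵀ * A1 * Q) (hBt : Bt = Qᵀ * B)
    (E : ℕ → Matrix (Fin n) (Fin n) ℝ) (F : ℕ → Matrix (Fin n) (Fin p) ℝ)
    (hE : ∀ j, 1 ≤ j → E j =
      Qᵀ * A1 * Qperp * ((Qperpᵀ * A1 * Qperp) ^ (j - 1)) * (Qperpᵀ * A1 * Q))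
    (hF : ∀ j, 1 ≤ j → F j =
      Qᵀ * A1 * Qperp * ((Qperpᵀ * A1 * Qperp) ^ (j - 1)) * (Qperpᵀ * B))
    (Psi : ℕ → Matrix (Fin n) (Fin (N - n)) ℝ)
    (hPsi : ∀ k, Psi k = Qᵀ * A1 * Qperp * ((Qperpᵀ * A1 * Qperp) ^ k))
    (x : ℕ → Fin N → ℝ)
    (hx : ∀ k, x (k + 1) = A1 *ᵥ x k + B *ᵥ u k)
    (z : ℕ → Fin n → ℝ) (hz : ∀ k, z k = Qᵀ *ᵥ x k) :
    ∀ k, z (k + 1) = At *ᵥ z k + Bt *ᵥ u k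
      + ∑ l ∈ Finset.range k, (E (k - l) *ᵥ z l + F (k - l) *ᵥ u l)
      + Psi k *ᵥ (Qperpᵀ *ᵥ x 0) := by
  set Ap : Matrix (Fin (N-n)) (Fin (N-n)) ℝ := Qperpᵀ * A1 * Qperp with hAp
  set C : Matrix (Fin (N-n)) (Fin n) ℝ := Qperpᵀ * A1 * Q with hC
  set D : Matrix (Fin (N-n)) (Fin p) ℝ := Qperpᵀ * B with hD
  set w : ℕ → Fin (N-n) → ℝ := fun k => Qperpᵀ *ᵥ x k with hwdef
  -- decomposition of x
  have hxdec : ∀ k, x k = Q *ᵥ z k + Qperp *ᵥ w k := by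
    intro k
    have : (Q * Qᵀ + Qperp * Qperpᵀ) *ᵥ x k = x k := by rw [hsum, one_mulVec]
    rw [← this, add_mulVec, hz k, hwdef]
    simp [mulVec_mulVec]
  -- recursion for w
  have hwrec : ∀ k, w (k+1) = Ap *ᵥ w k + C *ᵥ z k + D *ᵥ u k := by
    intro k
    show Qperpᵀ *ᵥ x (k+1) = _
    rw [hx k, mulVec_add, hxdec k, mulVec_add]
    simp [mulVec_add, mulVec_mulVec, hAp, hC, hD, Matrix.mul_assoc, add_assoc, add_comm]
  -- closed form for w
  have hwcl : ∀ k, w k = Ap ^ k *ᵥ w 0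
      + ∑ l ∈ Finset.range k, Ap ^ (k - 1 - l) *ᵥ (C *ᵥ z l + D *ᵥ u l) := by
    intro k
    induction k with
    | zero => simp
    | succ k ih =>
      rw [hwrec k, ih, mulVec_add, mulVec_mulVec, ← pow_succ']
      rw [Finset.sum_range_succ]
      have h1 : (Ap *ᵥ ∑ l ∈ Finset.range k, Ap ^ (k - 1 - l) *ᵥ (C *ᵥ z l + D *ᵥ u l))
          = ∑ l ∈ Finset.range k, Ap ^ (k + 1 - 1 - l) *ᵥ (C *ᵥ z l + D *ᵥ u l) := by
        rw [mulVec_sum']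
        refine Finset.sum_congr rfl fun l hl => ?_
        have hl' : l < k := Finset.mem_range.mp hl
        have he : k - 1 - l + 1 = k + 1 - 1 - l := by omega
        rw [mulVec_mulVec, ← pow_succ', he]
      rw [h1]
      have h2 : k + 1 - 1 - k = 0 := by omega
      rw [h2, pow_zero, one_mulVec]
      abel
  -- main computation
  intro k
  have hM : z (k+1) = At *ᵥ z k + Bt *ᵥ u k + (Qᵀ * A1 * Qperp) *ᵥ w k := by
    rw [hz (k+1), hx k, mulVec_add, hxdec k, mulVec_add]
    simp only [mulVec_add, mulVec_mulVec, hAt, hBt, Matrix.mul_assoc]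
    abel
  rw [hM, hwcl k, mulVec_add, mulVec_mulVec, mulVec_sum']
  have h3 : ∀ l ∈ Finset.range k,
      (Qᵀ * A1 * Qperp) *ᵥ (Ap ^ (k - 1 - l) *ᵥ (C *ᵥ z l + D *ᵥ u l))
        = E (k - l) *ᵥ z l + F (k - l) *ᵥ u l := by
    intro l hl
    have hl' : l < k := Finset.mem_range.mp hl
    have h1 : 1 ≤ k - l := by omega
    rw [hE _ h1, hF _ h1]
    have hkl : k - l - 1 = k - 1 - l := by omega
    rw [mulVec_mulVec, mulVec_add, mulVec_mulVec, mulVec_mulVec, hkl]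
  rw [Finset.sum_congr rfl h3, hPsi k]
  show _ = _ + _ + (Qᵀ * A1 * Qperp * Ap ^ k) *ᵥ w 0
  rw [Matrix.mul_assoc, ← mulVec_mulVec]
  abel
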